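/- Let ψ be a proper edge-colouring of the join K of K_3 (on {x_1,x_2,x_3}) and K_{1,4} (the star centred at y with leaves z_1,...,z_4) such that the subgraph consisting of the triangle and all 15 cross edges is rainbow under ψ. Then there exists t ∈ [4] such that the 5 vertices x_1, x_2, x_3, y, z_t induce a rainbow copy of K_5. -/

import Mathlib

open SimpleGraph

/-- The join of two vertex-disjoint graphs: both graphs together with all edges
between them. -/
def graphJoin {α β : Type*} (L : SimpleGraph α) (R : SimpleGraph β) :
    SimpleGraph (α ⊕ β) :=
  (L ⊕g R) ⊔ SimpleGraph.fromRel (fun x y => x.isLeft ∧ y.isRight)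

/-- The star `K_{1,m}`: `Fin (m+1)` with centre `0` joined to all other vertices. -/
def starGraph (m : ℕ) : SimpleGraph (Fin (m + 1)) :=
  SimpleGraph.fromRel (fun a _ => a = 0)

/-- The join of a triangle `K₃` (on `Fin 3`) with the star `K_{1,4}`
(on `Fin 5`, centred at `0`). -/
def K35hat : SimpleGraph (Fin 3 ⊕ Fin 5) :=
  graphJoin (⊤ : SimpleGraph (Fin 3)) (_root_.starGraph 4)

/-- An edge-colouring is proper if any two distinct edges sharing a vertex get
distinct colours. -/
def IsProperEdgeColouring {V : Type*} (G : SimpleGraph V) (ψ : Sym2 V → ℕ) : Prop :=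
  ∀ e₁ ∈ G.edgeSet, ∀ e₂ ∈ G.edgeSet, e₁ ≠ e₂ → (∃ v, v ∈ e₁ ∧ v ∈ e₂) → ψ e₁ ≠ ψ e₂

/-- The edges of the triangle together with all 15 cross edges of the join. -/
def triangleAndCrossEdges : Set (Sym2 (Fin 3 ⊕ Fin 5)) :=
  {e | ∃ a b : Fin 3, a ≠ b ∧ e = Sym2.mk (Sum.inl a) (Sum.inl b)} ∪
    {e | ∃ (a : Fin 3) (b : Fin 5), e = Sym2.mk (Sum.inl a) (Sum.inr b)}

/-- A set of vertices spans a rainbow clique: it is a clique and the colouring is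
injective on the edges spanned by it. -/
def IsRainbowClique {V : Type*} (G : SimpleGraph V) (ψ : Sym2 V → ℕ) (s : Finset V) :
    Prop :=
  G.IsClique s ∧
    ∀ a ∈ s, ∀ b ∈ s, ∀ c ∈ s, ∀ d ∈ s, a ≠ b → c ≠ d →
      ψ (Sym2.mk a b) = ψ (Sym2.mk c d) → Sym2.mk a b = Sym2.mk c d

/-- The ten edges spanned by `{x₀,x₁,x₂,y,z_t}`. -/
def Elist (t : Fin 4) : Finset (Sym2 (Fin 3 ⊕ Fin 5)) :=
  { Sym2.mk (Sum.inl 0) (Sum.inl 1), Sym2.mk (Sum.inl 0) (Sum.inl 2),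
    Sym2.mk (Sum.inl 1) (Sum.inl 2),
    Sym2.mk (Sum.inl 0) (Sum.inr 0), Sym2.mk (Sum.inl 0) (Sum.inr t.succ),
    Sym2.mk (Sum.inl 1) (Sum.inr 0), Sym2.mk (Sum.inl 1) (Sum.inr t.succ),
    Sym2.mk (Sum.inl 2) (Sum.inr 0), Sym2.mk (Sum.inl 2) (Sum.inr t.succ),
    Sym2.mk (Sum.inr 0) (Sum.inr t.succ) }

lemma memElist : ∀ (t : Fin 4) (a b : Fin 3 ⊕ Fin 5),
    a ∈ ({Sum.inl 0, Sum.inl 1, Sum.inl 2, Sum.inr 0, Sum.inr t.succ} :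
      Finset (Fin 3 ⊕ Fin 5)) →
    b ∈ ({Sum.inl 0, Sum.inl 1, Sum.inl 2, Sum.inr 0, Sum.inr t.succ} :
      Finset (Fin 3 ⊕ Fin 5)) →
    a ≠ b → Sym2.mk a b ∈ Elist t := by decide


set_option maxHeartbeats 1000000 in
/-- if `ψ` is a proper edge-colouring of the join of `K₃` (on
`{x₁,x₂,x₃}`) and `K_{1,4}` (star centred at `y` with leaves `z₁,…,z₄`) such that the
subgraph consisting of the triangle and all `15` cross edges is rainbow, then there
is `t ∈ [4]` such that `{x₁, x₂, x₃, y, z_t}` induces a rainbow copy of `K₅`. -/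
theorem rainbow_K5_in_K35hat
    (ψ : Sym2 (Fin 3 ⊕ Fin 5) → ℕ)
    (hproper : IsProperEdgeColouring K35hat ψ)
    (hrainbow : ∀ e₁ ∈ triangleAndCrossEdges, ∀ e₂ ∈ triangleAndCrossEdges,
      ψ e₁ = ψ e₂ → e₁ = e₂) :
    ∃ t : Fin 4,
      IsRainbowClique K35hat ψ
        {Sum.inl 0, Sum.inl 1, Sum.inl 2, Sum.inr 0, Sum.inr t.succ} := by
  have adjXX : ∀ i j : Fin 3, i ≠ j → K35hat.Adj (Sum.inl i) (Sum.inl j) := by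
    intro i j h; simp [K35hat, graphJoin, _root_.starGraph, h]
  have adjXY : ∀ (i : Fin 3) (b : Fin 5), K35hat.Adj (Sum.inl i) (Sum.inr b) := by
    intro i b; simp [K35hat, graphJoin, _root_.starGraph]
  have adjYZ : ∀ k : Fin 4, K35hat.Adj (Sum.inr 0) (Sum.inr k.succ) := by
    intro k; simp [K35hat, graphJoin, _root_.starGraph, (Fin.succ_ne_zero k).symm]
  have hTT : ∀ i j : Fin 3, i ≠ j →
      Sym2.mk (Sum.inl i) (Sum.inl j) ∈ triangleAndCrossEdges :=
    fun i j h => Or.inl ⟨i, j, h, rfl⟩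
  have hTC : ∀ (i : Fin 3) (b : Fin 5),
      Sym2.mk (Sum.inl i) (Sum.inr b) ∈ triangleAndCrossEdges :=
    fun i b => Or.inr ⟨i, b, rfl⟩
  -- the star edges get pairwise distinct colours
  have hstar : ∀ k k' : Fin 4, k ≠ k' →
      ψ (Sym2.mk (Sum.inr 0) (Sum.inr k.succ)) ≠
        ψ (Sym2.mk (Sum.inr 0) (Sum.inr k'.succ)) := by
    intro k k' hkk'
    apply hproper _ (mem_edgeSet _ |>.mpr (adjYZ k)) _ (mem_edgeSet _ |>.mpr (adjYZ k'))
    · intro hh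
      rw [Sym2.eq_iff] at hh
      simp [Fin.succ_ne_zero, (Fin.succ_ne_zero k').symm] at hh
      exact hkk' hh
    · exact ⟨Sum.inr 0, by simp, by simp⟩
  -- pigeonhole: some star edge avoids the three triangle colours
  have hex : ∃ t : Fin 4,
      ψ (Sym2.mk (Sum.inr 0) (Sum.inr t.succ)) ∉
        ({ψ (Sym2.mk (Sum.inl 0 : Fin 3 ⊕ Fin 5) (Sum.inl 1)),
          ψ (Sym2.mk (Sum.inl 0 : Fin 3 ⊕ Fin 5) (Sum.inl 2)),
          ψ (Sym2.mk (Sum.inl 1 : Fin 3 ⊕ Fin 5) (Sum.inl 2))} : Finset ℕ) := by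
    by_contra hcon
    push_neg at hcon
    have hcard : ({ψ (Sym2.mk (Sum.inl 0 : Fin 3 ⊕ Fin 5) (Sum.inl 1)),
          ψ (Sym2.mk (Sum.inl 0 : Fin 3 ⊕ Fin 5) (Sum.inl 2)),
          ψ (Sym2.mk (Sum.inl 1 : Fin 3 ⊕ Fin 5) (Sum.inl 2))} : Finset ℕ).card <
        (Finset.univ : Finset (Fin 4)).card := by
      have h1 := Finset.card_insert_le (ψ (Sym2.mk (Sum.inl 0 : Fin 3 ⊕ Fin 5) (Sum.inl 1)))
        ({ψ (Sym2.mk (Sum.inl 0 : Fin 3 ⊕ Fin 5) (Sum.inl 2)),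
          ψ (Sym2.mk (Sum.inl 1 : Fin 3 ⊕ Fin 5) (Sum.inl 2))} : Finset ℕ)
      have h2 := Finset.card_insert_le (ψ (Sym2.mk (Sum.inl 0 : Fin 3 ⊕ Fin 5) (Sum.inl 2)))
        ({ψ (Sym2.mk (Sum.inl 1 : Fin 3 ⊕ Fin 5) (Sum.inl 2))} : Finset ℕ)
      simp only [Finset.card_singleton, Finset.card_univ, Fintype.card_fin] at *
      omega
    obtain ⟨k, -, k', -, hne, heq⟩ :=
      Finset.exists_ne_map_eq_of_card_lt_of_maps_to hcard (fun k _ => hcon k)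
    exact hstar k k' hne heq
  obtain ⟨t, ht⟩ := hex
  simp only [Finset.mem_insert, Finset.mem_singleton, not_or] at ht
  refine ⟨t, ?_, ?_⟩
  · -- clique
    intro a ha b hb hne
    simp only [Finset.coe_insert, Finset.coe_singleton, Set.mem_insert_iff,
      Set.mem_singleton_iff] at ha hb
    rcases ha with rfl | rfl | rfl | rfl | rfl <;>
      rcases hb with rfl | rfl | rfl | rfl | rfl <;>
      first
        | exact absurd rfl hne
        | exact adjXX _ _ (by decide)
        | exact adjXY _ _
        | exact (adjXY _ _).symm
        | exact adjYZ t
        | exact (adjYZ t).symm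
  · -- rainbow
    have hgE : Sym2.mk (Sum.inr 0 : Fin 3 ⊕ Fin 5) (Sum.inr t.succ) ∈ K35hat.edgeSet :=
      (mem_edgeSet _).mpr (adjYZ t)
    have hBC0 : ∀ i : Fin 3,
        ψ (Sym2.mk (Sum.inl i) (Sum.inr 0)) ≠
          ψ (Sym2.mk (Sum.inr 0) (Sum.inr t.succ)) := fun i =>
      hproper _ ((mem_edgeSet _).mpr (adjXY i 0)) _ hgE (by simp [Sym2.eq_iff])
        ⟨Sum.inr 0, by simp, by simp⟩
    have hBCt : ∀ i : Fin 3,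
        ψ (Sym2.mk (Sum.inl i) (Sum.inr t.succ)) ≠
          ψ (Sym2.mk (Sum.inr 0) (Sum.inr t.succ)) := fun i =>
      hproper _ ((mem_edgeSet _).mpr (adjXY i t.succ)) _ hgE (by simp [Sym2.eq_iff])
        ⟨Sum.inr t.succ, by simp, by simp⟩
    have keyInj : ∀ e₁ ∈ Elist t, ∀ e₂ ∈ Elist t, ψ e₁ = ψ e₂ → e₁ = e₂ := by
      intro e₁ h₁ e₂ h₂ h
      simp only [Elist, Finset.mem_insert, Finset.mem_singleton] at h₁ h₂
      rcases h₁ with rfl | rfl | rfl | rfl | rfl | rfl | rfl | rfl | rfl | rfl <;>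
        rcases h₂ with rfl | rfl | rfl | rfl | rfl | rfl | rfl | rfl | rfl | rfl <;>
        first
          | rfl
          | exact hrainbow _ (hTT _ _ (by decide)) _ (hTT _ _ (by decide)) h
          | exact hrainbow _ (hTT _ _ (by decide)) _ (hTC _ _) h
          | exact hrainbow _ (hTC _ _) _ (hTT _ _ (by decide)) h
          | exact hrainbow _ (hTC _ _) _ (hTC _ _) h
          | exact absurd h.symm ht.1
          | exact absurd h.symm ht.2.1
          | exact absurd h.symm ht.2.2
          | exact absurd h ht.1
          | exact absurd h ht.2.1
          | exact absurd h ht.2.2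
          | exact absurd h (hBC0 _)
          | exact absurd h (hBCt _)
          | exact absurd h.symm (hBC0 _)
          | exact absurd h.symm (hBCt _)
    intro a ha b hb c hc d hd hab hcd h
    exact keyInj _ (memElist t a b ha hb hab) _ (memElist t c d hc hd hcd) h
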